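/- arXiv:math/0311198 — 6 statements merged into one kernel-verified Lean document; each statement's English description precedes it below -/
import Mathlib

section
/- Let U : ℝ × ℝ → Matrix (Fin m) (Fin n) ℂ be a twice continuously differentiable family of complex m×n matrices, written U(t,x) (t a modulus parameter, x a space coordinate), satisfying U(t,x)ᴴ · U(t,x) = 1ₙ for all (t,x). Set P(t,x) = U(t,x) · U(t,x)ᴴ, A(t,x) = U(t,x)ᴴ · ∂ₓU(t,x) and A_t(t,x) = U(t,x)ᴴ · ∂ₜU(t,x). If ∂ₜP(t,x) = 0 for all (t,x), then at every point ∂ₜA = ∂ₓA_t + A·A_t − A_t·A (i.e. the variation of the connection is the covariant derivative of A_t). -/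
/-!
Write `A = Uᴴ ∂ₓU` and `B = Uᴴ ∂ₜU`. By the product rule and the symmetry of mixed partials,
`∂ₜA - ∂ₓB = (∂ₜU)ᴴ ∂ₓU - (∂ₓU)ᴴ ∂ₜU`, so it remains to compute the commutator `AB - BA`.
Differentiating `Uᴴ U = 1` gives `Uᴴ ∂U = -(∂U)ᴴ U` in every direction, and `∂ₜP = 0` gives
`∂ₜU Uᴴ = -U (∂ₜU)ᴴ`. Together these yield `U Uᴴ ∂ₜU = ∂ₜU` and `Uᴴ ∂ₜU Uᴴ = -(∂ₜU)ᴴ`, hence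
`AB = -(∂ₓU)ᴴ ∂ₜU` and `BA = -(∂ₜU)ᴴ ∂ₓU`.
-/

open Matrix

/-- Entrywise partial derivative in the first (modulus) direction. -/
noncomputable def Dt {m n : ℕ} (F : ℝ × ℝ → Matrix (Fin m) (Fin n) ℂ) (p : ℝ × ℝ) :
    Matrix (Fin m) (Fin n) ℂ :=
  fun i j => fderiv ℝ (fun q => F q i j) p (1, 0)

/-- Entrywise partial derivative in the second (space) direction. -/
noncomputable def Dx {m n : ℕ} (F : ℝ × ℝ → Matrix (Fin m) (Fin n) ℂ) (p : ℝ × ℝ) :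
    Matrix (Fin m) (Fin n) ℂ :=
  fun i j => fderiv ℝ (fun q => F q i j) p (0, 1)

section MatrixDeriv

variable {E : Type*} [NormedAddCommGroup E] [NormedSpace ℝ E] {ι κ μ : Type*}

noncomputable def Dv (v : E) (F : E → Matrix ι κ ℂ) (p : E) : Matrix ι κ ℂ :=
  fun i j => fderiv ℝ (fun q => F q i j) p v

lemma Dv_const (v : E) (C : Matrix ι κ ℂ) (p : E) : Dv v (fun _ => C) p = 0 := by
  ext i j
  simp [Dv]

lemma Dv_conjTranspose (v : E) (F : E → Matrix ι κ ℂ) (p : E) :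
    Dv v (fun q => (F q)ᴴ) p = (Dv v F p)ᴴ := by
  ext i j
  simp only [Dv, conjTranspose_apply, fderiv_star]
  rfl

lemma Dv_mul [Fintype κ] {F : E → Matrix ι κ ℂ} {G : E → Matrix κ μ ℂ} {p : E}
    (hF : ∀ i j, DifferentiableAt ℝ (fun q => F q i j) p)
    (hG : ∀ i j, DifferentiableAt ℝ (fun q => G q i j) p) (v : E) :
    Dv v (fun q => F q * G q) p = Dv v F p * G p + F p * Dv v G p := by
  ext i j
  simp only [Dv, mul_apply, Matrix.add_apply]
  rw [fderiv_fun_sum (A := fun l q => F q i l * G q l j) fun l _ => (hF i l).mul (hG l j)]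
  simp [fderiv_fun_mul (hF _ _) (hG _ _), Finset.sum_add_distrib, mul_comm, add_comm]

lemma Dv_conjTranspose_mul [Fintype ι] {F : E → Matrix ι κ ℂ} {G : E → Matrix ι μ ℂ} {p : E}
    (hF : ∀ i j, DifferentiableAt ℝ (fun q => F q i j) p)
    (hG : ∀ i j, DifferentiableAt ℝ (fun q => G q i j) p) (v : E) :
    Dv v (fun q => (F q)ᴴ * G q) p = (Dv v F p)ᴴ * G p + (F p)ᴴ * Dv v G p := by
  have hFH : ∀ i j, DifferentiableAt ℝ (fun q => (F q)ᴴ i j) p := fun i j => (hF j i).star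
  rw [Dv_mul hFH hG, Dv_conjTranspose]

lemma Dv_mul_conjTranspose [Fintype κ] {F : E → Matrix ι κ ℂ} {G : E → Matrix μ κ ℂ} {p : E}
    (hF : ∀ i j, DifferentiableAt ℝ (fun q => F q i j) p)
    (hG : ∀ i j, DifferentiableAt ℝ (fun q => G q i j) p) (v : E) :
    Dv v (fun q => F q * (G q)ᴴ) p = Dv v F p * (G p)ᴴ + F p * (Dv v G p)ᴴ := by
  have hGH : ∀ i j, DifferentiableAt ℝ (fun q => (G q)ᴴ i j) p := fun i j => (hG j i).star
  rw [Dv_mul hF hGH, Dv_conjTranspose]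

lemma differentiableAt_Dv_apply {F : E → Matrix ι κ ℂ} {p : E}
    (hF : ∀ i j, ContDiffAt ℝ 2 (fun q => F q i j) p) (w : E) (i : ι) (j : κ) :
    DifferentiableAt ℝ (fun q => Dv w F q i j) p :=
  (((hF i j).fderiv_right (m := 1) le_rfl).differentiableAt one_ne_zero).clm_apply
    (differentiableAt_const w)

lemma Dv_Dv_comm {F : E → Matrix ι κ ℂ} {p : E}
    (hF : ∀ i j, ContDiffAt ℝ 2 (fun q => F q i j) p) (v w : E) :
    Dv v (Dv w F) p = Dv w (Dv v F) p := by
  ext i j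
  have hd := ((hF i j).fderiv_right (m := 1) le_rfl).differentiableAt one_ne_zero
  simp only [Dv, fderiv_clm_apply hd (differentiableAt_const _)]
  simpa using ((hF i j).isSymmSndFDerivAt (by simp)) v w

end MatrixDeriv

lemma commutator_connection_eq {R : Type*} [Ring R] {m n : Type*} [Fintype m] [Fintype n]
    [DecidableEq n] {U Ut Ux : Matrix m n R} {V Vt Vx : Matrix n m R} (hVU : V * U = 1)
    (ht : Vt * U + V * Ut = 0) (hx : Vx * U + V * Ux = 0) (hP : Ut * V + U * Vt = 0) :
    (V * Ux) * (V * Ut) - (V * Ut) * (V * Ux) = Vt * Ux - Vx * Ut := by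
  have hVUt : V * Ut = -(Vt * U) := eq_neg_of_add_eq_zero_right ht
  have hVUx : V * Ux = -(Vx * U) := eq_neg_of_add_eq_zero_right hx
  have hUtV : Ut * V = -(U * Vt) := eq_neg_of_add_eq_zero_left hP
  have hUVUt : U * (V * Ut) = Ut := by
    rw [hVUt, Matrix.mul_neg, ← Matrix.mul_assoc, eq_neg_of_add_eq_zero_right hP, Matrix.neg_mul,
      neg_neg, Matrix.mul_assoc, hVU, Matrix.mul_one]
  have hVUtV : V * Ut * V = -Vt := by
    rw [Matrix.mul_assoc, hUtV, Matrix.mul_neg, ← Matrix.mul_assoc, hVU, Matrix.one_mul]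
  have hAB : (V * Ux) * (V * Ut) = -(Vx * Ut) := by
    rw [hVUx, Matrix.neg_mul, Matrix.mul_assoc, hUVUt]
  have hBA : (V * Ut) * (V * Ux) = -(Vt * Ux) := by
    rw [← Matrix.mul_assoc, hVUtV, Matrix.neg_mul]
  rw [hAB, hBA]
  abel

/-- If `∂ₜ P = 0` where `P = U Uᴴ`, then `∂ₜ A = d_A A_t`, i.e.
`∂ₜ A = ∂ₓ A_t + A·A_t − A_t·A` for `A = Uᴴ ∂ₓ U` and `A_t = Uᴴ ∂ₜ U`. -/
theorem variation_of_connection_is_covariant_derivative {m n : ℕ}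
    (U : ℝ × ℝ → Matrix (Fin m) (Fin n) ℂ)
    (hU : ∀ i j, ContDiff ℝ 2 (fun p : ℝ × ℝ => U p i j))
    (hunit : ∀ p : ℝ × ℝ, (U p)ᴴ * U p = 1)
    (hP : ∀ p : ℝ × ℝ, Dt (fun q => U q * (U q)ᴴ) p = 0) :
    ∀ p : ℝ × ℝ,
      Dt (fun q => (U q)ᴴ * Dx U q) p =
        Dx (fun q => (U q)ᴴ * Dt U q) p
          + ((U p)ᴴ * Dx U p) * ((U p)ᴴ * Dt U p)
          - ((U p)ᴴ * Dt U p) * ((U p)ᴴ * Dx U p) := by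
  intro p
  have hC2 : ∀ i j, ContDiffAt ℝ 2 (fun q => U q i j) p := fun i j => (hU i j).contDiffAt
  have hD : ∀ i j, DifferentiableAt ℝ (fun q => U q i j) p :=
    fun i j => (hC2 i j).differentiableAt two_ne_zero
  have hUU (v : ℝ × ℝ) : (Dv v U p)ᴴ * U p + (U p)ᴴ * Dv v U p = 0 := by
    rw [← Dv_conjTranspose_mul hD hD, funext hunit, Dv_const]
  have hUUt : Dv (1, 0) U p * (U p)ᴴ + U p * (Dv (1, 0) U p)ᴴ = 0 := by
    rw [← Dv_mul_conjTranspose hD hD]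
    exact hP p
  show Dv (1, 0) (fun q => (U q)ᴴ * Dv (0, 1) U q) p =
    Dv (0, 1) (fun q => (U q)ᴴ * Dv (1, 0) U q) p
      + ((U p)ᴴ * Dv (0, 1) U p) * ((U p)ᴴ * Dv (1, 0) U p)
      - ((U p)ᴴ * Dv (1, 0) U p) * ((U p)ᴴ * Dv (0, 1) U p)
  rw [add_sub_assoc, commutator_connection_eq (hunit p) (hUU _) (hUU _) hUUt,
    Dv_conjTranspose_mul hD (differentiableAt_Dv_apply hC2 _),
    Dv_conjTranspose_mul hD (differentiableAt_Dv_apply hC2 _), Dv_Dv_comm hC2]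
  abel
end

section
/- Let U : ℝ → Matrix (Fin m) (Fin n) ℂ be a differentiable family of complex m×n matrices with U(t)ᴴ · U(t) = 1ₙ for all t, and set P(t) = U(t) · U(t)ᴴ. Then for all t: Tr( P′(t) · P′(t) ) = 2·Tr( (U(t)ᴴ·U′(t)) · (U(t)ᴴ·U′(t)) ) + 2·Tr( (U′(t))ᴴ · U′(t) ). (This expresses the damping factor Φ(U) = Tr(dP * dP) in terms of the connection components Uᴴ dU and the kinetic term dUᴴ dU.) -/
open Matrix

/-- Entrywise derivative of a matrix-valued function of a real variable. -/
noncomputable def matDeriv {m n : ℕ} (F : ℝ → Matrix (Fin m) (Fin n) ℂ) (t : ℝ) :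
    Matrix (Fin m) (Fin n) ℂ :=
  fun i j => deriv (fun s => F s i j) t

/-!
Differentiating `P = U Uᴴ` gives `P′ = D Vᴴ + V Dᴴ` with `V = U(t)`, `D = U′(t)`, and
differentiating the constraint `Uᴴ U = 1` gives `Dᴴ V = -(Vᴴ D)`. Expanding `Tr(P′P′)` and
cycling the trace, the two cross terms become `Tr(Dᴴ D)` because `Vᴴ V = 1`, and the two
square terms become `Tr((Vᴴ D)²)`, the second one after replacing `Dᴴ V` by `-(Vᴴ D)` twice.
-/

section TraceIdentity

variable {R ι κ : Type*} [CommRing R] [StarRing R] [Fintype ι] [Fintype κ] [DecidableEq κ]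

theorem trace_sq_mul_conjTranspose_add_of_isometry {V D : Matrix ι κ R}
    (hV : Vᴴ * V = 1) (hD : Dᴴ * V + Vᴴ * D = 0) :
    ((D * Vᴴ + V * Dᴴ) * (D * Vᴴ + V * Dᴴ)).trace =
      2 * ((Vᴴ * D) * (Vᴴ * D)).trace + 2 * (Dᴴ * D).trace := by
  have hDV : Dᴴ * V = -(Vᴴ * D) := eq_neg_of_add_eq_zero_left hD
  have square_left : (D * Vᴴ * (D * Vᴴ)).trace = ((Vᴴ * D) * (Vᴴ * D)).trace := by
    rw [Matrix.mul_assoc, trace_mul_comm]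
    simp only [Matrix.mul_assoc]
  have square_right : (V * Dᴴ * (V * Dᴴ)).trace = ((Vᴴ * D) * (Vᴴ * D)).trace := by
    rw [Matrix.mul_assoc, trace_mul_comm, ← Matrix.mul_assoc, Matrix.mul_assoc (Dᴴ * V), hDV,
      Matrix.neg_mul, Matrix.mul_neg, neg_neg]
  have cross_left : (D * Vᴴ * (V * Dᴴ)).trace = (Dᴴ * D).trace := by
    rw [Matrix.mul_assoc, ← Matrix.mul_assoc Vᴴ, hV, Matrix.one_mul, trace_mul_comm]
  have cross_right : (V * Dᴴ * (D * Vᴴ)).trace = (Dᴴ * D).trace := by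
    rw [trace_mul_comm, cross_left]
  simp only [Matrix.add_mul, Matrix.mul_add, trace_add]
  rw [square_left, square_right, cross_left, cross_right]
  ring

end TraceIdentity

section MatDeriv

variable {m k n : ℕ}

theorem matDeriv_mul {F : ℝ → Matrix (Fin m) (Fin k) ℂ} {G : ℝ → Matrix (Fin k) (Fin n) ℂ}
    {t : ℝ} (hF : ∀ i j, DifferentiableAt ℝ (fun s => F s i j) t)
    (hG : ∀ i j, DifferentiableAt ℝ (fun s => G s i j) t) :
    matDeriv (fun s => F s * G s) t = matDeriv F t * G t + F t * matDeriv G t := by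
  funext i j
  have h : HasDerivAt (fun s => (F s * G s) i j)
      ((matDeriv F t * G t + F t * matDeriv G t) i j) t := by
    simp only [mul_apply, Matrix.add_apply]
    rw [← Finset.sum_add_distrib]
    exact HasDerivAt.fun_sum fun l _ => (hF i l).hasDerivAt.mul (hG l j).hasDerivAt
  exact h.deriv

theorem matDeriv_conjTranspose (F : ℝ → Matrix (Fin m) (Fin n) ℂ) (t : ℝ) :
    matDeriv (fun s => (F s)ᴴ) t = (matDeriv F t)ᴴ := by
  funext i j
  exact deriv.star

theorem matDeriv_const (A : Matrix (Fin m) (Fin n) ℂ) (t : ℝ) :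
    matDeriv (fun _ => A) t = 0 := by
  funext i j
  exact deriv_const t (A i j)

theorem differentiableAt_conjTranspose_apply {F : ℝ → Matrix (Fin m) (Fin n) ℂ} {t : ℝ}
    (hF : ∀ i j, DifferentiableAt ℝ (fun s => F s i j) t) (i : Fin n) (j : Fin m) :
    DifferentiableAt ℝ (fun s => (F s)ᴴ i j) t :=
  (hF j i).hasDerivAt.star.differentiableAt

end MatDeriv

/-- The damping factor `Φ(U) = Tr(P′ P′)`, `P = U Uᴴ`, expressed in terms of the
connection component `Uᴴ U′` and the kinetic term `U′ᴴ U′`: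
`Tr(P′P′) = 2 Tr((UᴴU′)(UᴴU′)) + 2 Tr(U′ᴴ U′)`. -/
theorem damping_factor_formula {m n : ℕ}
    (U : ℝ → Matrix (Fin m) (Fin n) ℂ)
    (hU : ∀ i j, Differentiable ℝ (fun t => U t i j))
    (hunit : ∀ t : ℝ, (U t)ᴴ * U t = 1) :
    ∀ t : ℝ,
      (matDeriv (fun s => U s * (U s)ᴴ) t * matDeriv (fun s => U s * (U s)ᴴ) t).trace =
        2 * (((U t)ᴴ * matDeriv U t) * ((U t)ᴴ * matDeriv U t)).trace
          + 2 * ((matDeriv U t)ᴴ * matDeriv U t).trace := by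
  intro t
  have hUt : ∀ i j, DifferentiableAt ℝ (fun s => U s i j) t := fun i j => hU i j t
  have hUHt := differentiableAt_conjTranspose_apply hUt
  have hP : matDeriv (fun s => U s * (U s)ᴴ) t = matDeriv U t * (U t)ᴴ + U t * (matDeriv U t)ᴴ := by
    rw [matDeriv_mul hUt hUHt, matDeriv_conjTranspose]
  have hconstraint : (matDeriv U t)ᴴ * U t + (U t)ᴴ * matDeriv U t = 0 := by
    rw [← matDeriv_conjTranspose, ← matDeriv_mul hUHt hUt, funext hunit, matDeriv_const]
  rw [hP]
  exact trace_sq_mul_conjTranspose_add_of_isometry (hunit t) hconstraint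
end

section
/- Fix d ≥ 1 and define r_i² : ℝ^d → ℝ by r_i²(x) = 1/(exp(x_i) + 1) for i = 1, …, d−1. For every smooth map A : ℝ^d → ℝ^d (with components A_μ, μ = 1, …, d), there exist differentiable functions θ̄ : ℝ^d → ℝ and θ_i : ℝ^d → ℝ (i = 1, …, d−1) such that for every μ and every x ∈ ℝ^d: A_μ(x) = − Σ_{i=1}^{d−1} θ_i(x) · ∂(r_i²)/∂x_μ (x) + ∂θ̄/∂x_μ (x). That is, every U(1) connection 1-form on ℝ^d can be written as A = −Σ_{i=1}^{d−1} θ_i d(r_i²) + dθ̄ with the fixed functions r_i². -/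
open MeasureTheory Real intervalIntegral

noncomputable section
namespace AbelianNF

variable {d : ℕ}

/-- Zero out the ℓ-th coordinate, as a continuous linear map. -/
def P (ℓ : Fin d) : (Fin d → ℝ) →L[ℝ] (Fin d → ℝ) :=
  ContinuousLinearMap.id ℝ _ - (ContinuousLinearMap.proj ℓ).smulRight (Pi.single ℓ 1)

lemma update_eq (ℓ : Fin d) (x : Fin d → ℝ) (t : ℝ) :
    Function.update x ℓ t = P ℓ x + Pi.single ℓ t := by
  funext j
  by_cases h : j = ℓ
  · subst h; simp [P]
  · simp [P, Function.update_of_ne h, Pi.single_apply, h]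

lemma hasFDerivAt_update (ℓ : Fin d) (t : ℝ) (x₀ : Fin d → ℝ) :
    HasFDerivAt (fun x => Function.update x ℓ t) (P ℓ) x₀ := by
  have : (fun x : Fin d → ℝ => Function.update x ℓ t) = fun x => P ℓ x + Pi.single ℓ t := by
    funext x; exact update_eq ℓ x t
  rw [this]
  exact (P ℓ).hasFDerivAt.add_const _

lemma P_apply_single_ne (ℓ μ : Fin d) (h : μ ≠ ℓ) :
    P ℓ (Pi.single μ (1:ℝ)) = Pi.single μ 1 := by
  simp [P, Pi.single_apply, h]

lemma P_apply_single_self (ℓ : Fin d) : P ℓ (Pi.single ℓ (1:ℝ)) = 0 := by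
  simp [P]

lemma abs_sub_le_of_uIoc {a b t : ℝ} (ht : t ∈ Set.uIoc a b) : |t - a| ≤ |b - a| := by
  rcases Set.mem_uIoc.1 ht with h | h <;>
  · rw [abs_le]
    exact ⟨by nlinarith [le_abs_self (b - a), neg_abs_le (b - a)],
      by nlinarith [le_abs_self (b - a), neg_abs_le (b - a)]⟩

variable {d : ℕ}

lemma continuous_update (ℓ : Fin d) :
    Continuous fun p : (Fin d → ℝ) × ℝ => Function.update p.1 ℓ p.2 :=
  continuous_pi fun j => by
    by_cases h : j = ℓ
    · subst h; simpa using continuous_snd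
    · simpa [Function.update_of_ne h, Function.comp_def] using (continuous_apply j).comp continuous_fst


theorem pInt_hasFDerivAt (ℓ : Fin d) {g : (Fin d → ℝ) → ℝ} (hg : ContDiff ℝ (⊤ : ℕ∞) g)
    (x₀ : Fin d → ℝ) :
    HasFDerivAt (fun x => ∫ t in (0:ℝ)..(x ℓ), g (Function.update x ℓ t))
      ((∫ t in (0:ℝ)..(x₀ ℓ), (fderiv ℝ g (Function.update x₀ ℓ t)).comp (P ℓ)) +
        g x₀ • ContinuousLinearMap.proj ℓ) x₀ := by
  have hgc := hg.continuous
  have hgu : Continuous fun p : (Fin d → ℝ) × ℝ => g (Function.update p.1 ℓ p.2) :=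
    hgc.comp (continuous_update ℓ)
  have hInt : ∀ (x : Fin d → ℝ) (a b : ℝ),
      IntervalIntegrable (fun t => g (Function.update x ℓ t)) volume a b := fun x a b =>
    (hgu.comp (Continuous.prodMk_right x)).intervalIntegrable _ _
  -- derivative of the fixed-endpoint part
  have hK : IsCompact ((fun p : (Fin d → ℝ) × ℝ => Function.update p.1 ℓ p.2) ''
      (Metric.closedBall x₀ 1 ×ˢ Set.uIcc 0 (x₀ ℓ))) :=
    ((isCompact_closedBall x₀ 1).prod isCompact_uIcc).image (continuous_update ℓ)
  obtain ⟨C, hC⟩ := hK.exists_bound_of_continuousOn (hg.continuous_fderiv (by simp)).continuousOn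
  have h1 : HasFDerivAt (fun x => ∫ t in (0:ℝ)..(x₀ ℓ), g (Function.update x ℓ t))
      (∫ t in (0:ℝ)..(x₀ ℓ), (fderiv ℝ g (Function.update x₀ ℓ t)).comp (P ℓ)) x₀ := by
    apply intervalIntegral.hasFDerivAt_integral_of_dominated_of_fderiv_le (𝕜 := ℝ)
      (F' := fun x t => (fderiv ℝ g (Function.update x ℓ t)).comp (P ℓ))
      (bound := fun _ => C * ‖P ℓ‖) (Metric.ball_mem_nhds x₀ one_pos)
    · filter_upwards with x using
        ((hgu.comp (Continuous.prodMk_right x)).aestronglyMeasurable)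
    · exact hInt x₀ 0 (x₀ ℓ)
    · exact (((hg.continuous_fderiv (by simp)).comp
        ((continuous_update ℓ).comp (Continuous.prodMk_right x₀))).clm_comp
          continuous_const).aestronglyMeasurable
    · filter_upwards with t ht x hx
      have hy : Function.update x ℓ t ∈ (fun p : (Fin d → ℝ) × ℝ =>
          Function.update p.1 ℓ p.2) '' (Metric.closedBall x₀ 1 ×ˢ Set.uIcc 0 (x₀ ℓ)) :=
        ⟨(x, t), ⟨Metric.ball_subset_closedBall hx, Set.uIoc_subset_uIcc ht⟩, rfl⟩
      calc ‖(fderiv ℝ g (Function.update x ℓ t)).comp (P ℓ)‖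
          ≤ ‖fderiv ℝ g (Function.update x ℓ t)‖ * ‖P ℓ‖ :=
            ContinuousLinearMap.opNorm_comp_le _ _
        _ ≤ C * ‖P ℓ‖ := mul_le_mul_of_nonneg_right (hC _ hy) (norm_nonneg _)
    · exact intervalIntegrable_const
    · filter_upwards with t ht x hx
      exact ((hg.differentiable (by simp) _).hasFDerivAt).comp x (hasFDerivAt_update ℓ t x)
  -- derivative of the moving-endpoint part
  have h2 : HasFDerivAt (fun x => ∫ t in (x₀ ℓ)..(x ℓ), g (Function.update x ℓ t))
      (g x₀ • (ContinuousLinearMap.proj ℓ : (Fin d → ℝ) →L[ℝ] ℝ)) x₀ := by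
    rw [hasFDerivAt_iff_isLittleO, Asymptotics.isLittleO_iff]
    intro c hc
    have hcont : ContinuousAt (fun p : (Fin d → ℝ) × ℝ => g (Function.update p.1 ℓ p.2))
        (x₀, x₀ ℓ) := hgu.continuousAt
    rw [Metric.continuousAt_iff] at hcont
    obtain ⟨δ, hδpos, hδ⟩ := hcont c hc
    have hx₀ : Function.update x₀ ℓ (x₀ ℓ) = x₀ := Function.update_eq_self ℓ x₀
    filter_upwards [Metric.ball_mem_nhds x₀ hδpos] with x hx
    have hdx : dist x x₀ < δ := hx
    have e0 : (∫ t in (x₀ ℓ)..(x₀ ℓ), g (Function.update x₀ ℓ t)) = 0 :=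
      intervalIntegral.integral_same
    have e1 : (∫ t in (x₀ ℓ)..(x ℓ), g (Function.update x ℓ t)) - g x₀ * (x ℓ - x₀ ℓ)
        = ∫ t in (x₀ ℓ)..(x ℓ), (g (Function.update x ℓ t) - g x₀) := by
      rw [intervalIntegral.integral_sub (hInt x _ _) intervalIntegrable_const,
        intervalIntegral.integral_const, smul_eq_mul]
      ring
    have hest : ∀ t ∈ Set.uIoc (x₀ ℓ) (x ℓ), ‖g (Function.update x ℓ t) - g x₀‖ ≤ c := by
      intro t ht
      have h1' : |t - x₀ ℓ| ≤ |x ℓ - x₀ ℓ| := abs_sub_le_of_uIoc ht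
      have h2' : |x ℓ - x₀ ℓ| ≤ dist x x₀ := by
        simpa [Real.dist_eq] using dist_le_pi_dist x x₀ ℓ
      have hdist : dist ((x, t) : (Fin d → ℝ) × ℝ) (x₀, x₀ ℓ) < δ := by
        rw [Prod.dist_eq]
        refine max_lt hdx ?_
        rw [Real.dist_eq]
        exact lt_of_le_of_lt (h1'.trans h2') hdx
      have := hδ hdist
      rw [hx₀] at this
      rw [Real.norm_eq_abs, ← Real.dist_eq]
      exact this.le
    have hb : ‖∫ t in (x₀ ℓ)..(x ℓ), (g (Function.update x ℓ t) - g x₀)‖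
        ≤ c * |x ℓ - x₀ ℓ| :=
      intervalIntegral.norm_integral_le_of_norm_le_const hest
    calc ‖(∫ t in (x₀ ℓ)..(x ℓ), g (Function.update x ℓ t)) -
          (∫ t in (x₀ ℓ)..(x₀ ℓ), g (Function.update x₀ ℓ t)) -
          (g x₀ • ContinuousLinearMap.proj ℓ) (x - x₀)‖
        = ‖∫ t in (x₀ ℓ)..(x ℓ), (g (Function.update x ℓ t) - g x₀)‖ := by
          rw [e0, ← e1]
          norm_num [mul_comm]
      _ ≤ c * |x ℓ - x₀ ℓ| := hb
      _ ≤ c * ‖x - x₀‖ := by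
          refine mul_le_mul_of_nonneg_left ?_ hc.le
          have := dist_le_pi_dist x x₀ ℓ
          simpa [Real.dist_eq, dist_eq_norm] using this
  have key : (fun x : Fin d → ℝ => ∫ t in (0:ℝ)..(x ℓ), g (Function.update x ℓ t)) =
      fun x => (∫ t in (0:ℝ)..(x₀ ℓ), g (Function.update x ℓ t)) +
        ∫ t in (x₀ ℓ)..(x ℓ), g (Function.update x ℓ t) := by
    funext x
    exact (intervalIntegral.integral_add_adjacent_intervals (hInt x _ _) (hInt x _ _)).symm
  rw [key]
  exact h1.add h2


lemma pInt_differentiable (ℓ : Fin d) {g : (Fin d → ℝ) → ℝ} (hg : ContDiff ℝ (⊤ : ℕ∞) g) :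
    Differentiable ℝ (fun x => ∫ t in (0:ℝ)..(x ℓ), g (Function.update x ℓ t)) :=
  fun x => (pInt_hasFDerivAt ℓ hg x).differentiableAt

lemma pInt_fderiv_single (ℓ : Fin d) {g : (Fin d → ℝ) → ℝ} (hg : ContDiff ℝ (⊤ : ℕ∞) g)
    (x : Fin d → ℝ) (μ : Fin d) :
    fderiv ℝ (fun x => ∫ t in (0:ℝ)..(x ℓ), g (Function.update x ℓ t)) x (Pi.single μ 1)
      = (∫ t in (0:ℝ)..(x ℓ), fderiv ℝ g (Function.update x ℓ t) (P ℓ (Pi.single μ 1)))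
        + g x * ((Pi.single μ 1 : Fin d → ℝ) ℓ) := by
  rw [(pInt_hasFDerivAt ℓ hg x).fderiv, ContinuousLinearMap.add_apply,
    ContinuousLinearMap.smul_apply, ContinuousLinearMap.proj_apply]
  have hφ : IntervalIntegrable
      (fun t => (fderiv ℝ g (Function.update x ℓ t)).comp (P ℓ)) volume 0 (x ℓ) :=
    ((((hg.continuous_fderiv (by simp)).comp
        ((continuous_update ℓ).comp (Continuous.prodMk_right x))).clm_comp
          continuous_const).intervalIntegrable _ _)
  rw [ContinuousLinearMap.intervalIntegral_apply hφ]
  simp [ContinuousLinearMap.comp_apply, smul_eq_mul]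

lemma pInt_fderiv_single_self (ℓ : Fin d) {g : (Fin d → ℝ) → ℝ} (hg : ContDiff ℝ (⊤ : ℕ∞) g)
    (x : Fin d → ℝ) :
    fderiv ℝ (fun x => ∫ t in (0:ℝ)..(x ℓ), g (Function.update x ℓ t)) x (Pi.single ℓ 1)
      = g x := by
  rw [pInt_fderiv_single ℓ hg x ℓ, P_apply_single_self]
  simp

lemma pInt_fderiv_single_ne (ℓ : Fin d) {g : (Fin d → ℝ) → ℝ} (hg : ContDiff ℝ (⊤ : ℕ∞) g)
    (x : Fin d → ℝ) {μ : Fin d} (h : μ ≠ ℓ) :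
    fderiv ℝ (fun x => ∫ t in (0:ℝ)..(x ℓ), g (Function.update x ℓ t)) x (Pi.single μ 1)
      = ∫ t in (0:ℝ)..(x ℓ), fderiv ℝ g (Function.update x ℓ t) (Pi.single μ 1) := by
  rw [pInt_fderiv_single ℓ hg x μ, P_apply_single_ne ℓ μ h]
  simp [Pi.single_apply, h]

lemma contDiff_fderiv_apply {g : (Fin d → ℝ) → ℝ} (hg : ContDiff ℝ (⊤ : ℕ∞) g) (v : Fin d → ℝ) :
    ContDiff ℝ (⊤ : ℕ∞) fun y => fderiv ℝ g y v :=
  (hg.fderiv_right (by simp)).clm_apply contDiff_const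


lemma hasDerivAt_phi (s : ℝ) :
    HasDerivAt (fun s : ℝ => 1 / (Real.exp s + 1)) (-Real.exp s / (Real.exp s + 1) ^ 2) s := by
  have h : HasDerivAt (fun s : ℝ => Real.exp s + 1) (Real.exp s) s :=
    (Real.hasDerivAt_exp s).add_const 1
  have hne : Real.exp s + 1 ≠ 0 := by positivity
  have h2 := h.inv hne
  simp only [one_div]
  exact h2

lemma phi'_ne (s : ℝ) : -Real.exp s / (Real.exp s + 1) ^ 2 ≠ 0 :=
  div_ne_zero (neg_ne_zero.2 (Real.exp_pos s).ne') (by positivity)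

lemma r_hasFDerivAt (i : Fin d) (x : Fin d → ℝ) :
    HasFDerivAt (fun y : Fin d → ℝ => 1 / (Real.exp (y i) + 1))
      ((-Real.exp (x i) / (Real.exp (x i) + 1) ^ 2) •
        (ContinuousLinearMap.proj i : (Fin d → ℝ) →L[ℝ] ℝ)) x := by
  have := HasDerivAt.comp_hasFDerivAt (h₂ := fun s : ℝ => 1 / (Real.exp s + 1))
    (f := fun y : Fin d → ℝ => y i) x (hasDerivAt_phi (x i))
    ((ContinuousLinearMap.proj i : (Fin d → ℝ) →L[ℝ] ℝ).hasFDerivAt)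
  exact this

lemma r_fderiv_single (i μ : Fin d) (x : Fin d → ℝ) :
    fderiv ℝ (fun y : Fin d → ℝ => 1 / (Real.exp (y i) + 1)) x (Pi.single μ 1)
      = (-Real.exp (x i) / (Real.exp (x i) + 1) ^ 2) * ((Pi.single μ 1 : Fin d → ℝ) i) := by
  rw [(r_hasFDerivAt i x).fderiv]
  simp

end AbelianNF

open AbelianNF

/-- Every smooth `U(1)` connection `A = Σ_μ A_μ dx_μ` on `ℝ^d` can be written as
`A = −Σ_{i=1}^{d−1} θ_i d(r_i²) + dθ̄` where `r_i²(x) = 1/(exp(x_i) + 1)` are fixed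
functions. -/
theorem abelian_connection_normal_form (d : ℕ) (hd : 1 ≤ d)
    (A : (Fin d → ℝ) → (Fin d → ℝ)) (hA : ContDiff ℝ (⊤ : ℕ∞) A) :
    ∃ (θbar : (Fin d → ℝ) → ℝ) (θ : Fin (d - 1) → (Fin d → ℝ) → ℝ),
      Differentiable ℝ θbar ∧ (∀ i, Differentiable ℝ (θ i)) ∧
      ∀ (μ : Fin d) (x : Fin d → ℝ),
        A x μ =
          -(∑ i : Fin (d - 1), θ i x *
              fderiv ℝ
                (fun y : Fin d → ℝ => 1 / (Real.exp (y (Fin.castLE (Nat.sub_le d 1) i)) + 1))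
                x (Pi.single μ 1))
            + fderiv ℝ θbar x (Pi.single μ 1) := by
  set ℓ : Fin d := ⟨d - 1, by omega⟩ with hℓ
  set g : (Fin d → ℝ) → ℝ := fun x => A x ℓ with hgdef
  have hg : ContDiff ℝ (⊤ : ℕ∞) g := contDiff_pi.mp hA ℓ
  set θbar : (Fin d → ℝ) → ℝ := fun x => ∫ t in (0:ℝ)..(x ℓ), g (Function.update x ℓ t)
    with hθbardef
  have hcast : ∀ i : Fin (d - 1), (Fin.castLE (Nat.sub_le d 1) i : Fin d) ≠ ℓ := by
    intro i
    have := i.isLt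
    exact Fin.ne_of_val_ne (by simp [hℓ]; omega)
  refine ⟨θbar, fun i x =>
      ((∫ t in (0:ℝ)..(x ℓ), fderiv ℝ g (Function.update x ℓ t)
          (Pi.single (Fin.castLE (Nat.sub_le d 1) i) 1))
        - A x (Fin.castLE (Nat.sub_le d 1) i)) /
      (-Real.exp (x (Fin.castLE (Nat.sub_le d 1) i)) /
        (Real.exp (x (Fin.castLE (Nat.sub_le d 1) i)) + 1) ^ 2),
    pInt_differentiable ℓ hg, ?_, ?_⟩
  · intro i
    set i' : Fin d := Fin.castLE (Nat.sub_le d 1) i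
    have hnum1 : Differentiable ℝ fun x : Fin d → ℝ =>
        ∫ t in (0:ℝ)..(x ℓ), fderiv ℝ g (Function.update x ℓ t) (Pi.single i' 1) :=
      pInt_differentiable ℓ (contDiff_fderiv_apply hg (Pi.single i' 1))
    have hnum2 : Differentiable ℝ fun x : Fin d → ℝ => A x i' :=
      (contDiff_pi.mp hA i').differentiable (by simp)
    have hproj : Differentiable ℝ fun x : Fin d → ℝ => x i' :=
      (ContinuousLinearMap.proj i' : (Fin d → ℝ) →L[ℝ] ℝ).differentiable
    have hexp : Differentiable ℝ fun x : Fin d → ℝ => Real.exp (x i') :=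
      Real.differentiable_exp.comp hproj
    have hden : Differentiable ℝ fun x : Fin d → ℝ =>
        -Real.exp (x i') / (Real.exp (x i') + 1) ^ 2 :=
      Differentiable.comp (g := fun s : ℝ => -Real.exp s / (Real.exp s + 1) ^ 2)
        (Real.differentiable_exp.neg.div
          ((Real.differentiable_exp.add_const 1).pow 2) fun s => by positivity) hproj
    have H : Differentiable ℝ fun x : Fin d → ℝ =>
        ((∫ t in (0:ℝ)..(x ℓ), fderiv ℝ g (Function.update x ℓ t) (Pi.single i' 1))
          - A x i') * (-Real.exp (x i') / (Real.exp (x i') + 1) ^ 2)⁻¹ :=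
      (hnum1.sub hnum2).mul (hden.inv fun x => phi'_ne _)
    simpa only [div_eq_mul_inv] using H
  · intro μ x
    by_cases hμ : μ = ℓ
    · have hsum : ∀ i : Fin (d - 1),
          fderiv ℝ (fun y : Fin d → ℝ =>
            1 / (Real.exp (y (Fin.castLE (Nat.sub_le d 1) i)) + 1)) x (Pi.single μ 1) = 0 := by
        intro i
        rw [r_fderiv_single, Pi.single_eq_of_ne (by rw [hμ]; exact hcast i)]
        ring
      simp only [hsum, mul_zero, Finset.sum_const_zero, neg_zero, zero_add]
      rw [hμ]
      exact (pInt_fderiv_single_self ℓ hg x).symm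
    · have hlt : (μ : ℕ) < d - 1 := by
        have h1 := μ.isLt
        have h2 : (μ : ℕ) ≠ d - 1 := fun h => hμ (Fin.ext (by simp [hℓ, h]))
        omega
      set j : Fin (d - 1) := ⟨μ, hlt⟩ with hj
      have hjc : (Fin.castLE (Nat.sub_le d 1) j : Fin d) = μ := Fin.ext rfl
      rw [Finset.sum_eq_single j]
      · simp only [hjc, r_fderiv_single, Pi.single_eq_same, mul_one]
        rw [div_mul_cancel₀ _ (phi'_ne (x μ)), pInt_fderiv_single_ne ℓ hg x hμ]
        ring
      · intro i _ hij
        have hne : (Fin.castLE (Nat.sub_le d 1) i : Fin d) ≠ μ := by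
          intro h
          apply hij
          apply Fin.ext
          have : ((Fin.castLE (Nat.sub_le d 1) i : Fin d) : ℕ) = (μ : ℕ) := by rw [h]
          simpa [hj] using this
        rw [r_fderiv_single, Pi.single_eq_of_ne hne]
        ring
      · intro h
        exact absurd (Finset.mem_univ j) h
end
end

section
/- Fix d ≥ 1 and D ≥ 1. Let r_i : ℝ^D → ℝ (i = 1, …, d), θ_i : ℝ^D → ℝ (i = 1, …, d−1) and θ̄ : ℝ^D → ℝ be differentiable functions with Σ_{i=1}^{d} r_i(x)² = 1 for all x. Define θ_d = θ̄ − Σ_{i=1}^{d−1} r_i² θ_i and let U : ℝ^D → Matrix (Fin d) (Fin 1) ℂ be the column vector with entries U_i = r_i · exp(−i(θ_i + θ_d)) for i = 1, …, d−1 and U_d = r_d · exp(−i θ_d). Then for all x: (i) U(x)ᴴ · U(x) = 1 (the 1×1 identity), and (ii) for each coordinate direction μ of ℝ^D, i · (U(x)ᴴ · ∂_μ U(x)) = − Σ_{i=1}^{d−1} θ_i(x) · ∂_μ(r_i²)(x) + ∂_μ θ̄(x) (as a 1×1 matrix, i.e. a scalar identity). Thus U is a universal matrix for the abelian connection A = −Σ_{i=1}^{d−1}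 θ_i d(r_i²) + dθ̄. -/
/-!
Write `U_i = r_i e^{-iφ_i}` with phases `φ_i = θ_i + θ_d` (`i < d`) and `φ_d = θ_d`. Then
`Uᴴ U = Σ r_i² = 1`, and `Uᴴ ∂U = Σ r_i ∂r_i − i Σ r_i² ∂φ_i`, where the real part
`Σ r_i ∂r_i = ½ ∂(Σ r_i²)` vanishes because `Σ r_i²` is constant. So `i Uᴴ ∂U = Σ r_i² ∂φ_i
= Σ_{i<d} r_i² ∂θ_i + ∂θ_d` (using `Σ r_i² = 1` once more), and by the product rule
`∂θ_d = ∂θ̄ − Σ_{i<d} (θ_i ∂(r_i²) + r_i² ∂θ_i)`, leaving `−Σ_{i<d} θ_i ∂(r_i²) + ∂θ̄`.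
-/

open Matrix

/-- `θ_d = θ̄ − Σ_{i=1}^{d−1} r_i² θ_i` (here `d = n + 1`). -/
noncomputable def thetaLast {n D : ℕ} (r : Fin (n + 1) → (Fin D → ℝ) → ℝ)
    (θ : Fin n → (Fin D → ℝ) → ℝ) (θbar : (Fin D → ℝ) → ℝ) (x : Fin D → ℝ) : ℝ :=
  θbar x - ∑ i : Fin n, (r i.castSucc x) ^ 2 * θ i x

/-- The abelian universal matrix: the column vector with entries
`U_i = r_i·exp(−i(θ_i + θ_d))` for `i = 1, …, d−1` and `U_d = r_d·exp(−i θ_d)`. -/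
noncomputable def abelianU {n D : ℕ} (r : Fin (n + 1) → (Fin D → ℝ) → ℝ)
    (θ : Fin n → (Fin D → ℝ) → ℝ) (θbar : (Fin D → ℝ) → ℝ) (x : Fin D → ℝ) :
    Matrix (Fin (n + 1)) (Fin 1) ℂ :=
  fun i _ =>
    Fin.lastCases (motive := fun _ => ℂ)
      ((r (Fin.last n) x : ℂ) * Complex.exp (-Complex.I * (thetaLast r θ θbar x : ℂ)))
      (fun j => (r j.castSucc x : ℂ) *
        Complex.exp (-Complex.I * ((θ j x : ℂ) + (thetaLast r θ θbar x : ℂ))))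
      i

/-- Entrywise partial derivative of a matrix-valued function on `ℝ^D` in the
`μ`-th coordinate direction. -/
noncomputable def pderMat {D : ℕ} {ι κ : Type*} (F : (Fin D → ℝ) → Matrix ι κ ℂ)
    (μ : Fin D) (x : Fin D → ℝ) : Matrix ι κ ℂ :=
  fun i j => fderiv ℝ (fun y => F y i j) x (Pi.single μ 1)

section Polar

variable {ι E : Type*}

noncomputable def polarColumn (r φ : ι → E → ℝ) (x : E) : Matrix ι (Fin 1) ℂ :=
  fun i _ => (r i x : ℂ) * Complex.exp (-Complex.I * φ i x)

lemma star_ofReal_mul_cexp_neg_I_mul (a t : ℝ) :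
    star ((a : ℂ) * Complex.exp (-Complex.I * t)) = a * Complex.exp (Complex.I * t) := by
  simp [← Complex.exp_conj, Complex.conj_ofReal]

lemma cexp_I_mul_mul_cexp_neg_I_mul (a : ℂ) :
    Complex.exp (Complex.I * a) * Complex.exp (-Complex.I * a) = 1 := by
  rw [← Complex.exp_add, neg_mul, add_neg_cancel, Complex.exp_zero]

lemma conjTranspose_polarColumn_mul_self [Fintype ι] (r φ : ι → E → ℝ) (x : E)
    (hnorm : ∑ i, r i x ^ 2 = 1) :
    (polarColumn r φ x)ᴴ * polarColumn r φ x = 1 := by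
  ext a b
  rw [Subsingleton.elim a 0, Subsingleton.elim b 0, Matrix.one_apply_eq]
  simp only [Matrix.mul_apply, Matrix.conjTranspose_apply, polarColumn,
    star_ofReal_mul_cexp_neg_I_mul]
  calc ∑ i, (r i x : ℂ) * Complex.exp (Complex.I * φ i x)
          * ((r i x : ℂ) * Complex.exp (-Complex.I * φ i x))
      = ∑ i, ((r i x ^ 2 : ℝ) : ℂ) := by
        refine Finset.sum_congr rfl fun i _ => ?_
        rw [mul_mul_mul_comm, cexp_I_mul_mul_cexp_neg_I_mul]
        push_cast
        ring
    _ = 1 := by exact_mod_cast hnorm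

variable [NormedAddCommGroup E] [NormedSpace ℝ E]

lemma fderiv_ofReal_mul_cexp_neg_I_mul_apply {f g : E → ℝ} {x : E}
    (hf : DifferentiableAt ℝ f x) (hg : DifferentiableAt ℝ g x) (v : E) :
    fderiv ℝ (fun y => (f y : ℂ) * Complex.exp (-Complex.I * g y)) x v =
      (fderiv ℝ f x v - Complex.I * f x * fderiv ℝ g x v) * Complex.exp (-Complex.I * g x) := by
  have hf' := Complex.ofRealCLM.hasFDerivAt.comp x hf.hasFDerivAt
  have hg' := ((Complex.ofRealCLM.hasFDerivAt.comp x hg.hasFDerivAt).const_mul (-Complex.I)).cexp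
  rw [HasFDerivAt.fderiv (f := fun y => (f y : ℂ) * Complex.exp (-Complex.I * g y)) (hf'.mul hg')]
  simp only [Function.comp_apply, Complex.ofRealCLM_apply, neg_mul, _root_.add_apply,
    _root_.smul_apply, ContinuousLinearMap.comp_apply, smul_eq_mul, mul_neg]
  ring

lemma sum_mul_fderiv_eq_zero_of_sum_sq_eq_one [Fintype ι] {r : ι → E → ℝ} {x : E}
    (hr : ∀ i, DifferentiableAt ℝ (r i) x) (hnorm : ∀ y, ∑ i, r i y ^ 2 = 1) (v : E) :
    ∑ i, r i x * fderiv ℝ (r i) x v = 0 := by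
  have hconst : fderiv ℝ (fun y => ∑ i, r i y ^ 2) x v = 0 := by
    simp [funext hnorm]
  rw [fderiv_fun_sum (A := fun i y => r i y ^ 2) fun i _ => (hr i).pow 2] at hconst
  simpa [fderiv_fun_pow 2 (hr _), mul_assoc, ← Finset.mul_sum] using hconst

lemma star_polarColumn_mul_fderiv {r φ : ι → E → ℝ} {x : E} {i : ι}
    (hr : DifferentiableAt ℝ (r i) x) (hφ : DifferentiableAt ℝ (φ i) x) (v : E) :
    star (polarColumn r φ x i 0) * fderiv ℝ (fun y => polarColumn r φ y i 0) x v =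
      r i x * fderiv ℝ (r i) x v - Complex.I * (r i x ^ 2 * fderiv ℝ (φ i) x v) := by
  simp only [polarColumn, star_ofReal_mul_cexp_neg_I_mul,
    fderiv_ofReal_mul_cexp_neg_I_mul_apply hr hφ]
  linear_combination (r i x * fderiv ℝ (r i) x v
    - Complex.I * (r i x ^ 2 * fderiv ℝ (φ i) x v)) * cexp_I_mul_mul_cexp_neg_I_mul (φ i x : ℂ)

lemma I_mul_conjTranspose_polarColumn_mul_fderiv [Fintype ι] {r φ : ι → E → ℝ} {x : E}
    (hr : ∀ i, DifferentiableAt ℝ (r i) x) (hφ : ∀ i, DifferentiableAt ℝ (φ i) x)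
    (hnorm : ∀ y, ∑ i, r i y ^ 2 = 1) (v : E) :
    Complex.I * ((polarColumn r φ x)ᴴ *
        Matrix.of fun i j => fderiv ℝ (fun y => polarColumn r φ y i j) x v) 0 0 =
      ((∑ i, r i x ^ 2 * fderiv ℝ (φ i) x v : ℝ) : ℂ) := by
  simp only [Matrix.mul_apply, Matrix.conjTranspose_apply, Matrix.of_apply,
    star_polarColumn_mul_fderiv (hr _) (hφ _), Finset.sum_sub_distrib, ← Finset.mul_sum]
  have hrad : ∑ i, (r i x : ℂ) * fderiv ℝ (r i) x v = 0 := by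
    exact_mod_cast sum_mul_fderiv_eq_zero_of_sum_sq_eq_one hr hnorm v
  rw [hrad]
  push_cast
  linear_combination (-∑ i, (r i x : ℂ) ^ 2 * fderiv ℝ (φ i) x v) * Complex.I_sq

end Polar

section Abelian

variable {n D : ℕ} (r : Fin (n + 1) → (Fin D → ℝ) → ℝ) (θ : Fin n → (Fin D → ℝ) → ℝ)
  (θbar : (Fin D → ℝ) → ℝ)

noncomputable def abelianPhase (i : Fin (n + 1)) (x : Fin D → ℝ) : ℝ :=
  Fin.lastCases (motive := fun _ => ℝ) (thetaLast r θ θbar x)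
    (fun j => θ j x + thetaLast r θ θbar x) i

@[simp]
lemma abelianPhase_last : abelianPhase r θ θbar (Fin.last n) = thetaLast r θ θbar :=
  funext fun _ => Fin.lastCases_last

@[simp]
lemma abelianPhase_castSucc (j : Fin n) :
    abelianPhase r θ θbar j.castSucc = θ j + thetaLast r θ θbar :=
  funext fun _ => Fin.lastCases_castSucc _

lemma abelianU_eq_polarColumn : abelianU r θ θbar = polarColumn r (abelianPhase r θ θbar) := by
  funext x i j
  induction i using Fin.lastCases with
  | last => simp [abelianU, polarColumn]
  | cast j => simp [abelianU, polarColumn]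

variable {r θ θbar} {x : Fin D → ℝ}

lemma differentiableAt_thetaLast (hr : ∀ i, DifferentiableAt ℝ (r i) x)
    (hθ : ∀ i, DifferentiableAt ℝ (θ i) x) (hθbar : DifferentiableAt ℝ θbar x) :
    DifferentiableAt ℝ (thetaLast r θ θbar) x :=
  hθbar.sub <| .fun_sum fun i _ => ((hr i.castSucc).pow 2).mul (hθ i)

lemma differentiableAt_abelianPhase (hr : ∀ i, DifferentiableAt ℝ (r i) x)
    (hθ : ∀ i, DifferentiableAt ℝ (θ i) x) (hθbar : DifferentiableAt ℝ θbar x)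
    (i : Fin (n + 1)) : DifferentiableAt ℝ (abelianPhase r θ θbar i) x := by
  have hθL := differentiableAt_thetaLast hr hθ hθbar
  induction i using Fin.lastCases with
  | last => simpa using hθL
  | cast j => simpa using (hθ j).add hθL

lemma fderiv_thetaLast_apply (hr : ∀ i, DifferentiableAt ℝ (r i) x)
    (hθ : ∀ i, DifferentiableAt ℝ (θ i) x) (hθbar : DifferentiableAt ℝ θbar x)
    (v : Fin D → ℝ) :
    fderiv ℝ (thetaLast r θ θbar) x v = fderiv ℝ θbar x v - ∑ j : Fin n,
      (θ j x * fderiv ℝ (fun y => r j.castSucc y ^ 2) x v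
        + r j.castSucc x ^ 2 * fderiv ℝ (θ j) x v) := by
  have hterm : ∀ j : Fin n, DifferentiableAt ℝ (fun y => r j.castSucc y ^ 2 * θ j y) x :=
    fun j => ((hr j.castSucc).pow 2).mul (hθ j)
  have hprod : ∀ j : Fin n, fderiv ℝ (fun y => r j.castSucc y ^ 2 * θ j y) x v =
      θ j x * fderiv ℝ (fun y => r j.castSucc y ^ 2) x v
        + r j.castSucc x ^ 2 * fderiv ℝ (θ j) x v := fun j => by
    rw [fderiv_fun_mul (c := fun y => r j.castSucc y ^ 2) ((hr j.castSucc).pow 2) (hθ j)]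
    simp only [_root_.add_apply, _root_.smul_apply, smul_eq_mul]
    ring
  change fderiv ℝ (fun y => θbar y - ∑ j : Fin n, r j.castSucc y ^ 2 * θ j y) x v = _
  rw [fderiv_fun_sub hθbar (.fun_sum fun j _ => hterm j), fderiv_fun_sum fun j _ => hterm j]
  simp [hprod]

lemma sum_sq_mul_fderiv_abelianPhase (hr : ∀ i, DifferentiableAt ℝ (r i) x)
    (hθ : ∀ i, DifferentiableAt ℝ (θ i) x) (hθbar : DifferentiableAt ℝ θbar x)
    (hnorm : ∑ i, r i x ^ 2 = 1) (v : Fin D → ℝ) :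
    ∑ i, r i x ^ 2 * fderiv ℝ (abelianPhase r θ θbar i) x v =
      -(∑ i : Fin n, θ i x * fderiv ℝ (fun y => r i.castSucc y ^ 2) x v)
        + fderiv ℝ θbar x v := by
  have hθL := differentiableAt_thetaLast hr hθ hθbar
  calc ∑ i, r i x ^ 2 * fderiv ℝ (abelianPhase r θ θbar i) x v
      = ∑ j : Fin n, r j.castSucc x ^ 2 * fderiv ℝ (θ j) x v
          + (∑ i, r i x ^ 2) * fderiv ℝ (thetaLast r θ θbar) x v := by
        simp only [Fin.sum_univ_castSucc, abelianPhase_castSucc, abelianPhase_last,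
          fderiv_add (hθ _) hθL, _root_.add_apply, mul_add, add_mul, Finset.sum_add_distrib,
          Finset.sum_mul]
        ring
    _ = -(∑ i : Fin n, θ i x * fderiv ℝ (fun y => r i.castSucc y ^ 2) x v)
          + fderiv ℝ θbar x v := by
        rw [hnorm, one_mul, fderiv_thetaLast_apply hr hθ hθbar, Finset.sum_add_distrib]
        ring

end Abelian

theorem abelianU_is_universal_matrix_general {n D : ℕ}
    (r : Fin (n + 1) → (Fin D → ℝ) → ℝ)
    (θ : Fin n → (Fin D → ℝ) → ℝ) (θbar : (Fin D → ℝ) → ℝ)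
    (hr : ∀ i, Differentiable ℝ (r i))
    (hθ : ∀ i, Differentiable ℝ (θ i))
    (hθbar : Differentiable ℝ θbar)
    (hnorm : ∀ x, ∑ i : Fin (n + 1), (r i x) ^ 2 = 1) :
    ∀ x : Fin D → ℝ,
      (abelianU r θ θbar x)ᴴ * abelianU r θ θbar x = 1 ∧
      ∀ μ : Fin D,
        Complex.I * ((abelianU r θ θbar x)ᴴ * pderMat (abelianU r θ θbar) μ x) 0 0 =
          ((-(∑ i : Fin n, θ i x *
                fderiv ℝ (fun y => (r i.castSucc y) ^ 2) x (Pi.single μ 1))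
              + fderiv ℝ θbar x (Pi.single μ 1) : ℝ) : ℂ) := by
  intro x
  rw [abelianU_eq_polarColumn]
  refine ⟨conjTranspose_polarColumn_mul_self r _ x (hnorm x), fun μ => ?_⟩
  rw [← sum_sq_mul_fderiv_abelianPhase (hr · x) (hθ · x) (hθbar x) (hnorm x)]
  exact I_mul_conjTranspose_polarColumn_mul_fderiv (hr · x)
    (differentiableAt_abelianPhase (hr · x) (hθ · x) (hθbar x)) hnorm _

/-- The column vector `U` is a universal matrix for the abelian connection
`A = −Σ_{i=1}^{d−1} θ_i d(r_i²) + dθ̄`: it satisfies `Uᴴ U = 1` and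
`i·Uᴴ ∂_μ U = −Σ_i θ_i ∂_μ(r_i²) + ∂_μ θ̄`. -/
theorem abelianU_is_universal_matrix {n D : ℕ} (hD : 1 ≤ D)
    (r : Fin (n + 1) → (Fin D → ℝ) → ℝ)
    (θ : Fin n → (Fin D → ℝ) → ℝ) (θbar : (Fin D → ℝ) → ℝ)
    (hr : ∀ i, Differentiable ℝ (r i))
    (hθ : ∀ i, Differentiable ℝ (θ i))
    (hθbar : Differentiable ℝ θbar)
    (hnorm : ∀ x, ∑ i : Fin (n + 1), (r i x) ^ 2 = 1) :
    ∀ x : Fin D → ℝ,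
      (abelianU r θ θbar x)ᴴ * abelianU r θ θbar x = 1 ∧
      ∀ μ : Fin D,
        Complex.I * ((abelianU r θ θbar x)ᴴ * pderMat (abelianU r θ θbar) μ x) 0 0 =
          ((-(∑ i : Fin n, θ i x *
                fderiv ℝ (fun y => (r i.castSucc y) ^ 2) x (Pi.single μ 1))
              + fderiv ℝ θbar x (Pi.single μ 1) : ℝ) : ℂ) :=
  abelianU_is_universal_matrix_general r θ θbar hr hθ hθbar hnorm
end

section
/- For every real α > 1/2, every ρ > 0 and every a ∈ ℝ⁴: ∫_{ℝ⁴} (16 ρ² / (‖x−a‖² + ρ²)²)^α · (4 ρ² / (‖x−a‖² + ρ²)²) dx = 4^{2α+1} π² (2α−1) · Γ(2α−1)/Γ(2α+2) · ρ^{2−2α}. (This computes the aᵘ–aᵛ diagonal components of the universal metric g^{0,α} on the c₂ = 1 SU(2) instanton moduli space built from the ADHM universal matrix; the coefficient is A(α) = 4^{2α+1} π² (2α−1) Γ(2α−1)/Γ(2(α+1)).) -/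
/-!
The integrand is a function of `‖x - a‖²` alone. Translating to `a = 0` and passing to polar
coordinates in `ℝ⁴` (the unit sphere has area `4 · vol(B¹) = 2π²`), and writing the integrand as
`(16ρ²)^α · 4ρ² · (r² + ρ²)^(-s)` with `s = 2α + 2`, reduces the claim to the radial integral
`∫₀^∞ r³ (r² + ρ²)^(-s) dr = ρ^(4-2s) / (2(s-1)(s-2))`, which has an elementary antiderivative
and converges exactly when `s > 2`. The Gamma quotient of the statement is the same rational
function of `α`, because `x Γ(x) / Γ(x + 3) = 1 / ((x + 1)(x + 2))`.
-/

open MeasureTheory Real Set Filter Topology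

lemma EuclideanSpace.volume_real_ball_zero_one_fin_four :
    volume.real (Metric.ball (0 : EuclideanSpace ℝ (Fin 4)) 1) = π ^ 2 / 2 := by
  rw [measureReal_def, InnerProductSpace.volume_ball_of_dim_even (k := 2) (by simp)]
  norm_num [Nat.factorial, ENNReal.toReal_ofReal, pi_nonneg]
  positivity

theorem integral_fun_sum_sq_fin_four (g : ℝ → ℝ) :
    ∫ x : Fin 4 → ℝ, g (∑ μ, x μ ^ 2) =
      2 * π ^ 2 * ∫ r in Ioi 0, r ^ 3 * g (r ^ 2) := by
  rw [← (EuclideanSpace.volume_preserving_symm_measurableEquiv_toLp (Fin 4)).integral_comp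
    (MeasurableEquiv.measurableEmbedding _)]
  have polar := integral_fun_norm_addHaar (volume : Measure (EuclideanSpace ℝ (Fin 4)))
    (fun r => g (r ^ 2))
  simp only [EuclideanSpace.norm_eq, Real.norm_eq_abs, sq_abs, finrank_euclideanSpace_fin,
    EuclideanSpace.volume_real_ball_zero_one_fin_four, nsmul_eq_mul, smul_eq_mul] at polar
  simp_rw [Real.sq_sqrt (Finset.sum_nonneg fun _ _ => sq_nonneg _)] at polar
  convert polar using 1
  norm_num
  ring

theorem integral_fun_sum_sq_sub_fin_four (g : ℝ → ℝ) (a : Fin 4 → ℝ) :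
    ∫ x : Fin 4 → ℝ, g (∑ μ, (x μ - a μ) ^ 2) =
      2 * π ^ 2 * ∫ r in Ioi 0, r ^ 3 * g (r ^ 2) := by
  rw [← integral_fun_sum_sq_fin_four]
  exact integral_sub_right_eq_self (fun x : Fin 4 → ℝ => g (∑ μ, x μ ^ 2)) a

lemma hasDerivAt_antideriv_pow_three_mul_sq_add_rpow_neg {c s : ℝ} (hc : 0 < c) (hs1 : s ≠ 1)
    (hs2 : s ≠ 2) (r : ℝ) :
    HasDerivAt
      (fun r => ((r ^ 2 + c) ^ (2 - s) / (2 - s) - c * (r ^ 2 + c) ^ (1 - s) / (1 - s)) / 2)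
      (r ^ 3 * (r ^ 2 + c) ^ (-s)) r := by
  have hu : 0 < r ^ 2 + c := by positivity
  have hsq : HasDerivAt (fun r : ℝ => r ^ 2 + c) (2 * r) r := by
    simpa using (hasDerivAt_pow 2 r).add_const c
  have h2 := hsq.rpow_const (p := 2 - s) (Or.inl hu.ne')
  have h1 := hsq.rpow_const (p := 1 - s) (Or.inl hu.ne')
  refine (((h2.div_const (2 - s)).sub ((h1.const_mul c).div_const (1 - s))).div_const
    2).congr_deriv ?_
  rw [show 2 - s - 1 = 1 + -s by ring, rpow_add hu, rpow_one, show 1 - s - 1 = -s by ring]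
  field_simp [sub_ne_zero.2 hs1.symm, sub_ne_zero.2 hs2.symm]
  ring

theorem integral_Ioi_pow_three_mul_sq_add_rpow_neg {c s : ℝ} (hc : 0 < c) (hs : 2 < s) :
    ∫ r in Ioi 0, r ^ 3 * (r ^ 2 + c) ^ (-s) = c ^ (2 - s) / ((s - 1) * (s - 2)) / 2 := by
  have hderiv :=
    hasDerivAt_antideriv_pow_three_mul_sq_add_rpow_neg hc (by linarith) (by linarith)
  have hlim {p : ℝ} (hp : p < 0) : Tendsto (fun r : ℝ => (r ^ 2 + c) ^ p) atTop (𝓝 0) :=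
    (tendsto_rpow_neg_atTop (neg_pos.2 hp)).comp
      (tendsto_atTop_add_const_right _ c (tendsto_pow_atTop two_ne_zero)) |>.congr
      fun r => by simp
  have htop : Tendsto
      (fun r => ((r ^ 2 + c) ^ (2 - s) / (2 - s) - c * (r ^ 2 + c) ^ (1 - s) / (1 - s)) / 2)
      atTop (𝓝 0) := by
    simpa using (((hlim (p := 2 - s) (by linarith)).div_const (2 - s)).sub
      (((hlim (p := 1 - s) (by linarith)).const_mul c).div_const (1 - s))).div_const 2
  rw [integral_Ioi_of_hasDerivAt_of_nonneg (hderiv 0).continuousAt.continuousWithinAt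
    (fun r _ => hderiv r) (fun r (hr : 0 < r) => by positivity) htop]
  have hc1 : c * c ^ (1 - s) = c ^ (2 - s) := by
    rw [show 2 - s = 1 + (1 - s) by ring, rpow_add hc, rpow_one]
  have hs1 : 1 - s ≠ 0 := by linarith
  have hs2 : 2 - s ≠ 0 := by linarith
  have hs1' : s - 1 ≠ 0 := by linarith
  have hs2' : s - 2 ≠ 0 := by linarith
  rw [zero_pow two_ne_zero, zero_add, hc1]
  field_simp
  ring

lemma rpow_div_sq_mul_div_sq {b u : ℝ} (hb : 0 ≤ b) (hu : 0 < u) (α d : ℝ) :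
    (b / u ^ 2) ^ α * (d / u ^ 2) = b ^ α * d * u ^ (-(2 * α + 2)) := by
  rw [div_rpow hb (by positivity), ← rpow_natCast u 2, ← rpow_mul hu.le, rpow_neg hu.le,
    show 2 * α + 2 = (2 : ℕ) * α + (2 : ℕ) by push_cast; ring, rpow_add hu]
  field_simp

lemma sixteen_mul_sq_rpow_mul_four_mul_sq_mul_sq_rpow_neg {ρ : ℝ} (hρ : 0 < ρ) (α : ℝ) :
    (16 * ρ ^ 2) ^ α * (4 * ρ ^ 2) * (ρ ^ 2) ^ (-(2 * α)) =
      4 ^ (2 * α + 1) * ρ ^ (2 - 2 * α) := by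
  rw [show (16 : ℝ) = 4 ^ (2 : ℝ) by norm_num, mul_rpow (by positivity) (by positivity),
    ← rpow_mul (by norm_num), ← rpow_two ρ, ← rpow_mul hρ.le, ← rpow_mul hρ.le, mul_neg,
    rpow_neg hρ.le, show 2 * (2 * α) = 2 * α + 2 * α by ring, rpow_add hρ,
    rpow_add (by norm_num), rpow_sub hρ, rpow_one]
  field_simp

lemma Real.mul_Gamma_div_Gamma_add_three {x : ℝ} (hx : 0 < x) :
    x * Gamma x / Gamma (x + 3) = 1 / ((x + 1) * (x + 2)) := by
  rw [show x + 3 = x + 2 + 1 by ring, Gamma_add_one (by linarith),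
    show x + 2 = x + 1 + 1 by ring, Gamma_add_one (by linarith), Gamma_add_one hx.ne']
  have hΓ := Gamma_pos_of_pos hx
  field_simp

/-- The `a^μ`–`a^μ` component of the universal metric `g^{0,α}` on the `c₂ = 1`
`SU(2)` instanton moduli space built from the ADHM universal matrix:
`∫_{ℝ⁴} Φ(U)^α · Tr(∂_{a_μ}P ∂_{a_μ}P) dx = A(α) ρ^{2−2α}` with
`A(α) = 4^{2α+1} π² (2α−1) Γ(2α−1)/Γ(2α+2)`. -/
theorem adhm_metric_aa_component (α ρ : ℝ) (hα : 1 / 2 < α) (hρ : 0 < ρ)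
    (a : Fin 4 → ℝ) :
    ∫ x : Fin 4 → ℝ,
        (16 * ρ ^ 2 / ((∑ μ : Fin 4, (x μ - a μ) ^ 2) + ρ ^ 2) ^ 2) ^ α *
          (4 * ρ ^ 2 / ((∑ μ : Fin 4, (x μ - a μ) ^ 2) + ρ ^ 2) ^ 2) =
      4 ^ (2 * α + 1) * π ^ 2 * (2 * α - 1) *
        Real.Gamma (2 * α - 1) / Real.Gamma (2 * α + 2) * ρ ^ (2 - 2 * α) := by
  have hdensity (r : ℝ) :
      (16 * ρ ^ 2 / (r ^ 2 + ρ ^ 2) ^ 2) ^ α * (4 * ρ ^ 2 / (r ^ 2 + ρ ^ 2) ^ 2) =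
        (16 * ρ ^ 2) ^ α * (4 * ρ ^ 2) * (r ^ 2 + ρ ^ 2) ^ (-(2 * α + 2)) :=
    rpow_div_sq_mul_div_sq (by positivity) (by positivity) α _
  calc _ = 2 * π ^ 2 * ((16 * ρ ^ 2) ^ α * (4 * ρ ^ 2) *
          ∫ r in Ioi 0, r ^ 3 * (r ^ 2 + ρ ^ 2) ^ (-(2 * α + 2))) := by
        rw [integral_fun_sum_sq_sub_fin_four
          (fun t => (16 * ρ ^ 2 / (t + ρ ^ 2) ^ 2) ^ α * (4 * ρ ^ 2 / (t + ρ ^ 2) ^ 2)) a]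
        simp_rw [hdensity, mul_left_comm _ ((16 * ρ ^ 2) ^ α * (4 * ρ ^ 2)), integral_const_mul]
        ring
    _ = 2 * π ^ 2 * ((16 * ρ ^ 2) ^ α * (4 * ρ ^ 2) * (ρ ^ 2) ^ (-(2 * α)) /
          ((2 * α + 1) * (2 * α)) / 2) := by
        rw [integral_Ioi_pow_three_mul_sq_add_rpow_neg (by positivity) (by linarith)]
        ring_nf
    _ = 4 ^ (2 * α + 1) * π ^ 2 * (1 / ((2 * α - 1 + 1) * (2 * α - 1 + 2))) *
          ρ ^ (2 - 2 * α) := by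
        rw [sixteen_mul_sq_rpow_mul_four_mul_sq_mul_sq_rpow_neg hρ]
        ring
    _ = _ := by
        rw [← mul_Gamma_div_Gamma_add_three (by linarith),
          show 2 * α - 1 + 3 = 2 * α + 2 by ring]
        ring
end

section
/- For every real α > 1/2, every ρ > 0 and every a ∈ ℝ⁴: ∫_{ℝ⁴} (16 ρ² / (‖x−a‖² + ρ²)²)^α · (4 ‖x−a‖² / (‖x−a‖² + ρ²)²) dx = 4^{2α+1} π² · 2 Γ(2α−1)/Γ(2α+2) · ρ^{2−2α}; equivalently this equals A(α)·B(α)·ρ^{2−2α} with A(α) = 4^{2α+1} π² (2α−1) Γ(2α−1)/Γ(2(α+1)) and B(α) = 2/(2α−1). (This computes the ρ–ρ component of the universal metric g^{0,α} on the c₂ = 1 SU(2) instanton moduli space built from the ADHM universal matrix.) -/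
/-!
The integrand depends only on `t = ‖x - a‖²`. After translating `a` to `0`, polar coordinates
in `ℝ⁴` (where `|S³| = 2π²`) and the substitution `t = r²` turn the integral into
`π² ∫₀^∞ t f(t) dt`. For our `f` this is a multiple of `∫₀^∞ t² (t + ρ²)^(-(2α+2)) dt`, which
becomes three power integrals after the shift `t ↦ t - ρ²` and expanding `(t - ρ²)²`.
Finally `Γ(s) / Γ(s + 3) = 1 / (s (s + 1) (s + 2))` with `s = 2α - 1`.
-/

open MeasureTheory Real Set Module

lemma setIntegral_Ioi_zero_comp_add_right (g : ℝ → ℝ) (c : ℝ) :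
    ∫ u in Ioi 0, g (u + c) = ∫ v in Ioi c, g v := by
  rw [← (measurePreserving_add_right volume c).setIntegral_preimage_emb
    (measurableEmbedding_addRight c) g (Ioi c)]
  congr 1
  ext u
  simp

lemma sub_sq_mul_rpow_neg {c s v : ℝ} (hv : 0 < v) :
    (v - c) ^ 2 * v ^ (-s) = v ^ (2 - s) - 2 * c * v ^ (1 - s) + c ^ 2 * v ^ (-s) := by
  rw [sub_eq_add_neg 2 s, sub_eq_add_neg 1 s, rpow_add hv, rpow_add hv, rpow_one, rpow_two]
  ring

lemma integral_Ioi_sq_mul_add_rpow_neg {c s : ℝ} (hc : 0 < c) (hs : 3 < s) :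
    ∫ u in Ioi 0, u ^ 2 * (u + c) ^ (-s) =
      2 * c ^ (3 - s) / ((s - 1) * (s - 2) * (s - 3)) := by
  have h2 : 2 - s < -1 := by linarith
  have h1 : 1 - s < -1 := by linarith
  have h0 : -s < -1 := by linarith
  have I2 := integrableOn_Ioi_rpow_of_lt h2 hc
  have I1 := (integrableOn_Ioi_rpow_of_lt h1 hc).const_mul (2 * c)
  have I0 := (integrableOn_Ioi_rpow_of_lt h0 hc).const_mul (c ^ 2)
  have I21 : IntegrableOn (fun v => v ^ (2 - s) - 2 * c * v ^ (1 - s)) (Ioi c) := I2.sub I1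
  calc ∫ u in Ioi 0, u ^ 2 * (u + c) ^ (-s)
      = ∫ v in Ioi c, (v ^ (2 - s) - 2 * c * v ^ (1 - s) + c ^ 2 * v ^ (-s)) := by
        rw [← setIntegral_Ioi_zero_comp_add_right _ c]
        refine setIntegral_congr_fun measurableSet_Ioi fun u (hu : 0 < u) => ?_
        rw [← sub_sq_mul_rpow_neg (by linarith), add_sub_cancel_right]
    _ = -c ^ (3 - s) / (3 - s) + 2 * c * (c ^ (2 - s) / (2 - s))
          - c ^ 2 * (c ^ (1 - s) / (1 - s)) := by
        rw [integral_add I21 I0, integral_sub I2 I1, integral_const_mul,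
          integral_const_mul, integral_Ioi_rpow_of_lt h2 hc, integral_Ioi_rpow_of_lt h1 hc,
          integral_Ioi_rpow_of_lt h0 hc]
        ring_nf
    _ = 2 * c ^ (3 - s) / ((s - 1) * (s - 2) * (s - 3)) := by
        have e2 : c ^ (3 - s) = c * c ^ (2 - s) := by
          rw [show 3 - s = 1 + (2 - s) by ring, rpow_add hc, rpow_one]
        have e1 : c ^ (2 - s) = c * c ^ (1 - s) := by
          rw [show 2 - s = 1 + (1 - s) by ring, rpow_add hc, rpow_one]
        rw [e2, e1]
        have : s - 1 ≠ 0 := by linarith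
        have : s - 2 ≠ 0 := by linarith
        have : s - 3 ≠ 0 := by linarith
        have : 1 - s ≠ 0 := by linarith
        have : 2 - s ≠ 0 := by linarith
        have : 3 - s ≠ 0 := by linarith
        field_simp
        ring

lemma measureReal_ball_zero_one_of_finrank_eq_four {E : Type*} [NormedAddCommGroup E]
    [InnerProductSpace ℝ E] [FiniteDimensional ℝ E] [MeasurableSpace E] [BorelSpace E]
    (hE : finrank ℝ E = 4) :
    volume.real (Metric.ball (0 : E) 1) = π ^ 2 / 2 := by
  have : Nontrivial E := Module.nontrivial_of_finrank_pos (R := ℝ) (by omega)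
  rw [measureReal_def, InnerProductSpace.volume_ball_of_dim_even (k := 2) hE]
  simp [ENNReal.toReal_ofReal (by positivity : 0 ≤ π ^ 2 / 2)]

lemma integral_Ioi_pow_three_mul_comp_sq (F : ℝ → ℝ) :
    ∫ r in Ioi 0, r ^ 3 * F (r ^ 2) = (1 / 2) * ∫ u in Ioi 0, u * F u := by
  rw [← integral_comp_rpow_Ioi_of_pos (g := fun u => u * F u) two_pos, ← integral_const_mul]
  refine setIntegral_congr_fun measurableSet_Ioi fun r (hr : 0 < r) => ?_
  simp only [rpow_two, smul_eq_mul]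
  norm_num
  ring

lemma integral_comp_norm_sq_of_finrank_eq_four {E : Type*} [NormedAddCommGroup E]
    [InnerProductSpace ℝ E] [FiniteDimensional ℝ E] [MeasurableSpace E] [BorelSpace E]
    (hE : finrank ℝ E = 4) (F : ℝ → ℝ) :
    ∫ x : E, F (‖x‖ ^ 2) = π ^ 2 * ∫ u in Ioi 0, u * F u := by
  have : Nontrivial E := Module.nontrivial_of_finrank_pos (R := ℝ) (by omega)
  rw [integral_fun_norm_addHaar volume (fun r => F (r ^ 2)), hE,
    measureReal_ball_zero_one_of_finrank_eq_four hE]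
  simp only [nsmul_eq_mul, smul_eq_mul]
  norm_num [integral_Ioi_pow_three_mul_comp_sq]
  ring

lemma integral_comp_sum_sub_sq_fin_four (F : ℝ → ℝ) (a : Fin 4 → ℝ) :
    ∫ x : Fin 4 → ℝ, F (∑ μ, (x μ - a μ) ^ 2) = π ^ 2 * ∫ u in Ioi 0, u * F u := by
  have h := integral_sub_right_eq_self (μ := volume) (fun x : Fin 4 → ℝ => F (∑ μ, x μ ^ 2)) a
  simp only [Pi.sub_apply] at h
  rw [h, ← integral_comp_norm_sq_of_finrank_eq_four finrank_euclideanSpace_fin F,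
    ← (EuclideanSpace.volume_preserving_symm_measurableEquiv_toLp (Fin 4)).integral_comp
      (MeasurableEquiv.toLp 2 (Fin 4 → ℝ)).symm.measurableEmbedding]
  simp [EuclideanSpace.norm_sq_eq]

lemma mul_div_sq_rpow_mul_div_sq {α b c d u : ℝ} (hb : 0 ≤ b) (hu : 0 < u + c) :
    u * ((b / (u + c) ^ 2) ^ α * (d * u / (u + c) ^ 2)) =
      d * b ^ α * (u ^ 2 * (u + c) ^ (-(2 * α + 2))) := by
  rw [div_rpow hb (by positivity), ← rpow_natCast, ← rpow_mul hu.le,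
    neg_add, rpow_add hu, rpow_neg hu.le, rpow_neg hu.le]
  push_cast
  rw [mul_comm (2 : ℝ) α, rpow_two]
  field_simp

lemma integral_Ioi_mul_div_sq_rpow_mul_div_sq {α b c d : ℝ} (hα : 1 / 2 < α) (hb : 0 ≤ b)
    (hc : 0 < c) :
    ∫ u in Ioi 0, u * ((b / (u + c) ^ 2) ^ α * (d * u / (u + c) ^ 2)) =
      2 * d * b ^ α * c ^ (1 - 2 * α) / ((2 * α - 1) * (2 * α) * (2 * α + 1)) := by
  rw [setIntegral_congr_fun measurableSet_Ioi fun u (hu : 0 < u) =>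
      mul_div_sq_rpow_mul_div_sq hb (by positivity : 0 < u + c),
    integral_const_mul, integral_Ioi_sq_mul_add_rpow_neg hc (by linarith),
    show 3 - (2 * α + 2) = 1 - 2 * α by ring, show 2 * α + 2 - 1 = 2 * α + 1 by ring,
    show 2 * α + 2 - 2 = 2 * α by ring, show 2 * α + 2 - 3 = 2 * α - 1 by ring]
  ring

lemma Real.Gamma_add_three {s : ℝ} (hs : 0 < s) :
    Gamma (s + 3) = s * (s + 1) * (s + 2) * Gamma s := by
  rw [show s + 3 = s + 1 + 1 + 1 by ring, Gamma_add_one (by linarith),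
    Gamma_add_one (by linarith), Gamma_add_one hs.ne']
  ring

/-- The `ρ`–`ρ` component of the universal metric `g^{0,α}` on the `c₂ = 1`
`SU(2)` instanton moduli space built from the ADHM universal matrix:
`∫_{ℝ⁴} Φ(U)^α · Tr(∂_ρP ∂_ρP) dx = 4^{2α+1} π² · 2Γ(2α−1)/Γ(2α+2) · ρ^{2−2α}`,
i.e. `A(α)·B(α)·ρ^{2−2α}` with `B(α) = 2/(2α−1)`. -/
theorem adhm_metric_rhorho_component (α ρ : ℝ) (hα : 1 / 2 < α) (hρ : 0 < ρ)
    (a : Fin 4 → ℝ) :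
    ∫ x : Fin 4 → ℝ,
        (16 * ρ ^ 2 / ((∑ μ : Fin 4, (x μ - a μ) ^ 2) + ρ ^ 2) ^ 2) ^ α *
          (4 * (∑ μ : Fin 4, (x μ - a μ) ^ 2) /
            ((∑ μ : Fin 4, (x μ - a μ) ^ 2) + ρ ^ 2) ^ 2) =
      4 ^ (2 * α + 1) * π ^ 2 * 2 *
        Real.Gamma (2 * α - 1) / Real.Gamma (2 * α + 2) * ρ ^ (2 - 2 * α) := by
  rw [integral_comp_sum_sub_sq_fin_four
      (fun t => (16 * ρ ^ 2 / (t + ρ ^ 2) ^ 2) ^ α * (4 * t / (t + ρ ^ 2) ^ 2)) a,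
    integral_Ioi_mul_div_sq_rpow_mul_div_sq hα (by positivity) (by positivity)]
  have hΓ : Gamma (2 * α + 2) = (2 * α - 1) * (2 * α) * (2 * α + 1) * Gamma (2 * α - 1) := by
    rw [show 2 * α + 2 = 2 * α - 1 + 3 by ring, Gamma_add_three (by linarith)]
    ring
  have h4 : (4 : ℝ) ^ (2 * α + 1) = 4 * 16 ^ α := by
    rw [rpow_add (by norm_num), rpow_one, rpow_mul (by norm_num)]
    norm_num [mul_comm]
  have hρpow : (ρ ^ 2) ^ α * (ρ ^ 2) ^ (1 - 2 * α) = ρ ^ (2 - 2 * α) := by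
    rw [← rpow_add (by positivity), ← rpow_natCast, ← rpow_mul hρ.le]
    congr 1
    push_cast
    ring
  have : 2 * α - 1 ≠ 0 := by linarith
  have : α ≠ 0 := by linarith
  have : 2 * α + 1 ≠ 0 := by linarith
  have : Gamma (2 * α - 1) ≠ 0 := (Gamma_pos_of_pos (by linarith)).ne'
  rw [mul_rpow (by norm_num) (by positivity), h4, ← hρpow, hΓ]
  field_simp
end
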